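/- Let f, g ∈ F be given by admissible linear systems 𝒜_f = (u_f, A_f, v_f) and 𝒜_g = (u_g, A_g, v_g), and let 𝒜_f + 𝒜_g = (e₁, [[A_f, −A_f u_fᵀ u_g], [0, A_g]], [v_f; v_g]) and 𝒜_f · 𝒜_g = (e₁, [[A_f, −v_f u_g], [0, A_g]], [0; v_g]) be the ALSs for f + g and f g built from them. Then the K-linear spans of the left families satisfy L(𝒜_f + 𝒜_g) = L(𝒜_f) + L(𝒜_g) (sum of K-subspaces of F), and L(𝒜_f · 𝒜_g) = L(𝒜_f) g + L(𝒜_g), where L(𝒜_f) g = { w g : w ∈ L(𝒜_f) }; in particular L(𝒜_g) ⊆ L(𝒜_f · 𝒜_g). -/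

import Mathlib

/-!
Both system matrices are block upper triangular, and so are their inverses:
`[[A, C], [0, D]]⁻¹ = [[A⁻¹, -A⁻¹ C D⁻¹], [0, D⁻¹]]`. Hence the left family of the combined
system is `s_g` (the left family of `𝒜_g`) stacked under `A_f⁻¹ x - A_f⁻¹ C s_g`, where `x` is
the top block of the right-hand side. For the sum, `x = v_f` and `-A_f⁻¹ C s_g = u_fᵀ u_g s_g`
only adds a `K`-multiple of an entry of `s_g` to `s_f`, which does not change
`L(𝒜_f) + L(𝒜_g)`. For the product, `x = 0` and `-A_f⁻¹ C s_g = s_f (u_g s_g) = s_f g`.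
-/

open Matrix

def e1Row (F : Type*) [Semiring F] (n : ℕ) [NeZero n] : Matrix (Fin 1) (Fin n) F :=
  Matrix.of fun _ j => if j = 0 then 1 else 0

section BlockTriangular

variable {m n R : Type*} [Fintype m] [Fintype n] [DecidableEq m] [DecidableEq n] [Ring R]

theorem fromBlocks_zero₂₁_mul_eq_one {A B : Matrix m m R} {D E : Matrix n n R}
    (C : Matrix m n R) (hAB : A * B = 1) (hDE : D * E = 1) :
    fromBlocks A C 0 D * fromBlocks B (-(B * C * E)) 0 E = 1 := by
  rw [fromBlocks_multiply, ← fromBlocks_one]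
  congr 1
  · simp [hAB]
  · simp [← Matrix.mul_assoc, hAB]
  · simp
  · simp [hDE]

theorem eq_fromBlocks_zero₂₁_of_mul_eq_one {A B : Matrix m m R} {D E : Matrix n n R}
    {C : Matrix m n R} {X : Matrix (m ⊕ n) (m ⊕ n) R} (hX : X * fromBlocks A C 0 D = 1)
    (hAB : A * B = 1) (hDE : D * E = 1) :
    X = fromBlocks B (-(B * C * E)) 0 E :=
  left_inv_eq_right_inv hX (fromBlocks_zero₂₁_mul_eq_one C hAB hDE)

end BlockTriangular

theorem span_range_fromRows_col {K M m n o : Type*} [Semiring K] [AddCommMonoid M] [Module K M]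
    (X : Matrix m o M) (Y : Matrix n o M) (j : o) :
    Submodule.span K (Set.range fun p => fromRows X Y p j)
      = Submodule.span K (Set.range fun i => X i j)
        ⊔ Submodule.span K (Set.range fun i => Y i j) := by
  have h : (fun p => fromRows X Y p j) = Sum.elim (fun i => X i j) (fun i => Y i j) := by
    ext (i | i) <;> rfl
  rw [h, Set.Sum.elim_range, Submodule.span_union]

theorem span_range_add_sup_of_mem {K M ι : Type*} [Ring K] [AddCommGroup M] [Module K M]
    (x y : ι → M) {S : Submodule K M} (hy : ∀ i, y i ∈ S) :
    Submodule.span K (Set.range (x + y)) ⊔ S = Submodule.span K (Set.range x) ⊔ S := by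
  have hx (i : ι) : x i ∈ Submodule.span K (Set.range x) := Submodule.subset_span ⟨i, rfl⟩
  have hxy (i : ι) : (x + y) i ∈ Submodule.span K (Set.range (x + y)) :=
    Submodule.subset_span ⟨i, rfl⟩
  apply le_antisymm <;> refine sup_le (Submodule.span_le.2 ?_) le_sup_right <;>
    rintro _ ⟨i, rfl⟩
  · exact add_mem (Submodule.mem_sup_left (hx i)) (Submodule.mem_sup_right (hy i))
  · rw [← add_sub_cancel_right (x i) (y i)]
    exact sub_mem (Submodule.mem_sup_left (hxy i)) (Submodule.mem_sup_right (hy i))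

theorem map_mul_apply_mem_span {K F m n o : Type*} [CommSemiring K] [Semiring F] [Algebra K F]
    [Fintype n] (N : Matrix m n K) (s : Matrix n o F) (i : m) (j : o) :
    (N.map (algebraMap K F) * s) i j ∈ Submodule.span K (Set.range fun k => s k j) := by
  rw [mul_apply]
  refine Submodule.sum_mem _ fun k _ => ?_
  rw [map_apply, ← Algebra.smul_def]
  exact Submodule.smul_mem _ _ (Submodule.subset_span ⟨k, rfl⟩)

theorem span_range_mul_right {K F ι : Type*} [CommSemiring K] [Semiring F] [Algebra K F]
    (x : ι → F) (g : F) :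
    Submodule.span K (Set.range fun i => x i * g)
      = Submodule.map (LinearMap.mulRight K g) (Submodule.span K (Set.range x)) := by
  rw [Submodule.map_span, ← Set.range_comp]
  rfl

theorem left_family_spans_general {K F : Type*} [Field K] [DivisionRing F] [Algebra K F]
    {nf ng : ℕ} [NeZero nf] [NeZero ng]
    (g : F)
    (Af Bf : Matrix (Fin nf) (Fin nf) F) (vf : Matrix (Fin nf) (Fin 1) K)
    (Ag Bg : Matrix (Fin ng) (Fin ng) F) (vg : Matrix (Fin ng) (Fin 1) K)
    (hAf : Af * Bf = 1) (hAf' : Bf * Af = 1)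
    (hAg : Ag * Bg = 1)
    (hg : g = (e1Row F ng * Bg * vg.map (algebraMap K F)) 0 0)
    (Asum Bsum : Matrix (Fin nf ⊕ Fin ng) (Fin nf ⊕ Fin ng) F)
    (hAsum : Asum = fromBlocks Af
      (-(Af * Matrix.single (0 : Fin nf) (0 : Fin ng) (1 : F))) 0 Ag)
    (hBsum' : Bsum * Asum = 1)
    (Aprod Bprod : Matrix (Fin nf ⊕ Fin ng) (Fin nf ⊕ Fin ng) F)
    (hAprod : Aprod = fromBlocks Af (-(vf.map (algebraMap K F) * e1Row F ng)) 0 Ag)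
    (hBprod' : Bprod * Aprod = 1) :
    (Submodule.span K (Set.range fun p => (Bsum *
        fromRows (vf.map (algebraMap K F)) (vg.map (algebraMap K F))) p 0)
      = Submodule.span K (Set.range fun p => (Bf * vf.map (algebraMap K F)) p 0)
        ⊔ Submodule.span K (Set.range fun p => (Bg * vg.map (algebraMap K F)) p 0)) ∧
    (Submodule.span K (Set.range fun p => (Bprod *
        fromRows (0 : Matrix (Fin nf) (Fin 1) F) (vg.map (algebraMap K F))) p 0)
      = Submodule.map (LinearMap.mulRight K g)
          (Submodule.span K (Set.range fun p => (Bf * vf.map (algebraMap K F)) p 0))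
        ⊔ Submodule.span K (Set.range fun p => (Bg * vg.map (algebraMap K F)) p 0)) ∧
    (Submodule.span K (Set.range fun p => (Bg * vg.map (algebraMap K F)) p 0)
      ≤ Submodule.span K (Set.range fun p => (Bprod *
          fromRows (0 : Matrix (Fin nf) (Fin 1) F) (vg.map (algebraMap K F))) p 0)) := by
  subst hAsum hAprod
  rw [eq_fromBlocks_zero₂₁_of_mul_eq_one hBsum' hAf hAg,
    eq_fromBlocks_zero₂₁_of_mul_eq_one hBprod' hAf hAg, fromBlocks_mul_fromRows,
    fromBlocks_mul_fromRows]
  simp only [Matrix.zero_mul, Matrix.mul_zero, zero_add, span_range_fromRows_col]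
  set sf := Bf * vf.map (algebraMap K F)
  set sg := Bg * vg.map (algebraMap K F)
  have hsum_top : -(Bf * -(Af * single (0 : Fin nf) (0 : Fin ng) (1 : F)) * Bg)
      * vg.map (algebraMap K F)
      = (single (0 : Fin nf) (0 : Fin ng) (1 : K)).map (algebraMap K F) * sg := by
    simp only [map_single, map_one, Matrix.mul_neg, Matrix.neg_mul, neg_neg, ← Matrix.mul_assoc,
      hAf', Matrix.one_mul]
    exact Matrix.mul_assoc _ _ _
  have hprod_top : (fun i => (-(Bf * -(vf.map (algebraMap K F) * e1Row F ng) * Bg)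
      * vg.map (algebraMap K F)) i 0) = fun i => sf i 0 * g := by
    ext i
    simp only [Matrix.mul_neg, Matrix.neg_mul, neg_neg, Matrix.mul_assoc]
    rw [← Matrix.mul_assoc Bf, mul_apply, Fin.sum_univ_one, hg, Matrix.mul_assoc (e1Row F ng)]
  rw [hsum_top, hprod_top, span_range_mul_right]
  exact ⟨span_range_add_sup_of_mem (fun i => sf i 0) _ fun i => map_mul_apply_mem_span _ _ i 0,
    rfl, le_sup_right⟩

/-- Spans of left families under the rational operations: for the sum ALS one has
`L(𝒜_f + 𝒜_g) = L(𝒜_f) + L(𝒜_g)`, and for the product ALS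
`L(𝒜_f · 𝒜_g) = L(𝒜_f)·g + L(𝒜_g)`; in particular `L(𝒜_g) ⊆ L(𝒜_f · 𝒜_g)`. -/
theorem left_family_spans {K F : Type*} [Field K] [DivisionRing F] [Algebra K F]
    {nf ng : ℕ} [NeZero nf] [NeZero ng]
    (f g : F)
    (Af Bf : Matrix (Fin nf) (Fin nf) F) (vf : Matrix (Fin nf) (Fin 1) K)
    (Ag Bg : Matrix (Fin ng) (Fin ng) F) (vg : Matrix (Fin ng) (Fin 1) K)
    (hAf : Af * Bf = 1) (hAf' : Bf * Af = 1)
    (hAg : Ag * Bg = 1) (hAg' : Bg * Ag = 1)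
    (hf : f = (e1Row F nf * Bf * vf.map (algebraMap K F)) 0 0)
    (hg : g = (e1Row F ng * Bg * vg.map (algebraMap K F)) 0 0)
    (Asum Bsum : Matrix (Fin nf ⊕ Fin ng) (Fin nf ⊕ Fin ng) F)
    (hAsum : Asum = fromBlocks Af
      (-(Af * Matrix.single (0 : Fin nf) (0 : Fin ng) (1 : F))) 0 Ag)
    (hBsum : Asum * Bsum = 1) (hBsum' : Bsum * Asum = 1)
    (Aprod Bprod : Matrix (Fin nf ⊕ Fin ng) (Fin nf ⊕ Fin ng) F)
    (hAprod : Aprod = fromBlocks Af (-(vf.map (algebraMap K F) * e1Row F ng)) 0 Ag)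
    (hBprod : Aprod * Bprod = 1) (hBprod' : Bprod * Aprod = 1) :
    (Submodule.span K (Set.range fun p => (Bsum *
        fromRows (vf.map (algebraMap K F)) (vg.map (algebraMap K F))) p 0)
      = Submodule.span K (Set.range fun p => (Bf * vf.map (algebraMap K F)) p 0)
        ⊔ Submodule.span K (Set.range fun p => (Bg * vg.map (algebraMap K F)) p 0)) ∧
    (Submodule.span K (Set.range fun p => (Bprod *
        fromRows (0 : Matrix (Fin nf) (Fin 1) F) (vg.map (algebraMap K F))) p 0)
      = Submodule.map (LinearMap.mulRight K g)
          (Submodule.span K (Set.range fun p => (Bf * vf.map (algebraMap K F)) p 0))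
        ⊔ Submodule.span K (Set.range fun p => (Bg * vg.map (algebraMap K F)) p 0)) ∧
    (Submodule.span K (Set.range fun p => (Bg * vg.map (algebraMap K F)) p 0)
      ≤ Submodule.span K (Set.range fun p => (Bprod *
          fromRows (0 : Matrix (Fin nf) (Fin 1) F) (vg.map (algebraMap K F))) p 0)) :=
  left_family_spans_general g Af Bf vf Ag Bg vg hAf hAf' hAg hg Asum Bsum hAsum hBsum' Aprod Bprod
    hAprod hBprod'
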